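/- arXiv:1503.07184 — 6 statements merged into one kernel-verified Lean document; each statement's English description precedes it below -/
import Mathlib

section
/- For any colored cube c and any face i, the colored cube c ∘ (swap of faces i and τ(i)) has the same variety as the mirror cube c*; consequently, two colored cubes c and d have the same set of opposite pairs if and only if d has the same variety as c or the same variety as c*. Moreover c and c* never have the same variety, so a variety v and its mirror variety v* are the only two varieties with a given set of three opposite pairs. -/
open scoped Classical

/-- A colored cube: a bijection assigning to each face (`Fin 6`) a color (`Fin 6`). -/
abbrev CCube := Equiv.Perm (Fin 6)

/-- The opposite-face involution: face `i` is opposite face `i + 3`. -/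
def tau (i : Fin 6) : Fin 6 := i + 3

/-- Quarter-turn rotation about the axis through the face pair `{2, 5}`. -/
def r1 : Equiv.Perm (Fin 6) := ([0, 1, 3, 4] : List (Fin 6)).formPerm

/-- Quarter-turn rotation about the axis through the face pair `{0, 3}`. -/
def r2 : Equiv.Perm (Fin 6) := ([1, 2, 4, 5] : List (Fin 6)).formPerm

/-- The rotation group of the cube, acting on the set of faces. -/
def G : Subgroup (Equiv.Perm (Fin 6)) := Subgroup.closure {r1, r2}

/-- Two colored cubes have the same variety iff one is obtained from the other by
precomposition with a rotation. -/
def sameVariety (c d : CCube) : Prop := ∃ g ∈ G, d = c * g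

def varietySetoid : Setoid CCube where
  r := sameVariety
  iseqv := by
    refine ⟨fun c => ⟨1, G.one_mem, (mul_one c).symm⟩, ?_, ?_⟩
    · rintro c d ⟨g, hg, rfl⟩
      exact ⟨g⁻¹, G.inv_mem hg, by group⟩
    · rintro a b c ⟨g, hg, rfl⟩ ⟨h, hh, rfl⟩
      exact ⟨g * h, G.mul_mem hg hh, by group⟩

/-- A variety is a `G`-orbit of colored cubes. -/
def Variety := Quotient varietySetoid

/-- The variety of a colored cube. -/
def varietyOf (c : CCube) : Variety := Quotient.mk varietySetoid c

/-- The three opposite pairs of colors of a colored cube. -/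
def oppPairs (c : CCube) : Finset (Finset (Fin 6)) :=
  Finset.image (fun i => ({c i, c (tau i)} : Finset (Fin 6))) Finset.univ

/-- The twelve adjacent pairs of colors of a colored cube. -/
def adjPairs (c : CCube) : Finset (Finset (Fin 6)) :=
  Finset.image (fun p : Fin 6 × Fin 6 => ({c p.1, c p.2} : Finset (Fin 6)))
    (Finset.univ.filter (fun p : Fin 6 × Fin 6 => p.2 ≠ p.1 ∧ p.2 ≠ tau p.1))

/-- The mirror cube of `c`. -/
def mirror (c : CCube) : CCube := c * Equiv.swap 0 3

/-- Cyclic rotation of an ordered triple. -/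
def cyc (t : Fin 6 × Fin 6 × Fin 6) : Fin 6 × Fin 6 × Fin 6 := (t.2.1, t.2.2, t.1)

/-- The cyclic equivalence class of an ordered triple. -/
def cycClass (t : Fin 6 × Fin 6 × Fin 6) : Finset (Fin 6 × Fin 6 × Fin 6) :=
  {t, cyc t, cyc (cyc t)}

/-- The eight corner triples of a colored cube: faces `0, 1, 2` meet at a corner, read
clockwise, and the corners of the cube are the images of this corner under rotations. -/
noncomputable def cornerTriples (c : CCube) : Finset (Finset (Fin 6 × Fin 6 × Fin 6)) :=
  Finset.univ.filter (fun s => ∃ g ∈ G, s = cycClass (c (g 0), c (g 1), c (g 2)))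

/-- The opposite pairs of a variety. -/
noncomputable def vOpp (v : Variety) : Finset (Finset (Fin 6)) := oppPairs (Quotient.out v)

/-- The adjacent pairs of a variety. -/
noncomputable def vAdj (v : Variety) : Finset (Finset (Fin 6)) := adjPairs (Quotient.out v)

/-- The corner triples of a variety. -/
noncomputable def vCorners (v : Variety) : Finset (Finset (Fin 6 × Fin 6 × Fin 6)) :=
  cornerTriples (Quotient.out v)

/-- The mirror variety of a variety. -/
noncomputable def vMirror (v : Variety) : Variety := varietyOf (mirror (Quotient.out v))

/-- A pentad: five varieties which pairwise share no corner triples and whose fifteen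
opposite pairs comprise each unordered pair of colors exactly once. -/
def IsPentad (P : Finset Variety) : Prop :=
  P.card = 5 ∧
  (∀ v ∈ P, ∀ w ∈ P, v ≠ w → vCorners v ∩ vCorners w = ∅) ∧
  (∀ p : Finset (Fin 6), p.card = 2 → ∃! v, v ∈ P ∧ p ∈ vOpp v)

/-- A corner solution from the multiset `S` modeled on the cube `m`: eight distinct cube
instances from `S` in bijection with the eight corner triples of `m`, each chosen cube having
its assigned corner triple among its own corner triples. -/
def CornerSolutionOn (S : Multiset CCube) (m : CCube) : Prop :=
  ∃ ψ : Finset (Fin 6 × Fin 6 × Fin 6) → CCube,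
    Multiset.map ψ (cornerTriples m).val ≤ S ∧
    ∀ t ∈ cornerTriples m, t ∈ cornerTriples (ψ t)

/-- `S` contains a corner solution modeled on some variety. -/
def HasCornerSolution (S : Multiset CCube) : Prop := ∃ m : CCube, CornerSolutionOn S m

/-- An `n`-frame solution from `S` modeled on the cube `m`: a corner solution together with,
for each of the twelve adjacent pairs of `m`, a further `n - 2` cube instances having that
adjacent pair, all `12n - 16` cube instances distinct. -/
def FrameSolutionOn (n : ℕ) (S : Multiset CCube) (m : CCube) : Prop :=
  ∃ (ψ : Finset (Fin 6 × Fin 6 × Fin 6) → CCube) (f : Finset (Fin 6) → Multiset CCube),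
    (∀ t ∈ cornerTriples m, t ∈ cornerTriples (ψ t)) ∧
    (∀ p ∈ adjPairs m, Multiset.card (f p) = n - 2 ∧ ∀ x ∈ f p, p ∈ adjPairs x) ∧
    Multiset.map ψ (cornerTriples m).val + (adjPairs m).sum f ≤ S

/-- `S` contains an `n`-frame solution modeled on some variety. -/
def HasFrameSolution (n : ℕ) (S : Multiset CCube) : Prop := ∃ m : CCube, FrameSolutionOn n S m

/-!
Give face `i` the outward unit normal `±e_(i mod 3)`, with sign `+` for `i < 3`; then `r1`, `r2`
are quarter turns and `swap 0 3` is a reflection. Two cubes have the same opposite pairs iff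
`c⁻¹ * d` commutes with `tau`, and the permutations commuting with `tau` form the group of the
octahedron, of which `G` is the orientation-preserving half: `G` preserves the triple product of
the normals (checked on generators), and conversely `G` is simply transitive on ordered pairs of
adjacent faces, while a permutation commuting with `tau` is determined by its values on the
three mutually adjacent faces `0, 1, 2`. So the octahedral group is `G ∪ G * swap 0 3`, and
`swap 0 3`, reversing orientation, lies outside `G`.
-/

open Equiv

lemma tau_tau (i : Fin 6) : tau (tau i) = i := by
  revert i; decide

lemma sameVariety_iff {c d : CCube} : sameVariety c d ↔ c⁻¹ * d ∈ G := by
  constructor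
  · rintro ⟨g, hg, rfl⟩
    rwa [inv_mul_cancel_left]
  · exact fun h => ⟨c⁻¹ * d, h, (mul_inv_cancel_left c d).symm⟩

def tauCentralizer : Subgroup (Perm (Fin 6)) := Subgroup.centralizer {Equiv.addRight 3}

lemma mem_tauCentralizer_iff {g : Perm (Fin 6)} :
    g ∈ tauCentralizer ↔ ∀ i, g (tau i) = tau (g i) := by
  rw [tauCentralizer, Subgroup.mem_centralizer_singleton_iff, Perm.ext_iff]
  rfl

def faceNormal : Fin 6 → Fin 3 → ℤ :=
  ![![1, 0, 0], ![0, 1, 0], ![0, 0, 1], ![-1, 0, 0], ![0, -1, 0], ![0, 0, -1]]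

def orientation (x y z : Fin 6) : ℤ :=
  faceNormal x ⬝ᵥ crossProduct (faceNormal y) (faceNormal z)

def orientationPreserving : Subgroup (Perm (Fin 6)) where
  carrier := {g | ∀ x y z, orientation (g x) (g y) (g z) = orientation x y z}
  one_mem' _ _ _ := rfl
  mul_mem' {g h} hg hh x y z := (hg (h x) (h y) (h z)).trans (hh x y z)
  inv_mem' {g} hg x y z := by
    simpa using (hg (g⁻¹ x) (g⁻¹ y) (g⁻¹ z)).symm

lemma mem_orientationPreserving_iff {g : Perm (Fin 6)} :
    g ∈ orientationPreserving ↔ ∀ x y z, orientation (g x) (g y) (g z) = orientation x y z :=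
  Iff.rfl

lemma G_le_tauCentralizer : G ≤ tauCentralizer := by
  refine (Subgroup.closure_le _).mpr ?_
  rintro g (rfl | rfl) <;> rw [SetLike.mem_coe, mem_tauCentralizer_iff] <;> decide

lemma G_le_orientationPreserving : G ≤ orientationPreserving := by
  refine (Subgroup.closure_le _).mpr ?_
  rintro g (rfl | rfl) <;> rw [SetLike.mem_coe, mem_orientationPreserving_iff] <;> decide

lemma exists_mem_G_apply_zero_apply_one {x y : Fin 6} (hyx : y ≠ x) (hy : y ≠ tau x) :
    ∃ g ∈ G, g 0 = x ∧ g 1 = y := by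
  have hwords : ∃ k m n : Fin 4, (r2 ^ (m : ℕ) * r1 ^ (k : ℕ) * r2 ^ (n : ℕ)) 0 = x ∧
      (r2 ^ (m : ℕ) * r1 ^ (k : ℕ) * r2 ^ (n : ℕ)) 1 = y := by
    revert x y; decide
  obtain ⟨k, m, n, hx, hy⟩ := hwords
  have hr1 : r1 ∈ G := Subgroup.subset_closure (Set.mem_insert _ _)
  have hr2 : r2 ∈ G := Subgroup.subset_closure (Set.mem_insert_of_mem _ rfl)
  exact ⟨_, mul_mem (mul_mem (pow_mem hr2 _) (pow_mem hr1 _)) (pow_mem hr2 _), hx, hy⟩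

lemma eq_one_or_eq_swap_of_apply_zero_of_apply_one {k : Perm (Fin 6)} (hk : k ∈ tauCentralizer)
    (h0 : k 0 = 0) (h1 : k 1 = 1) : k = 1 ∨ k = swap 2 5 := by
  rw [mem_tauCentralizer_iff] at hk
  have h3 : k 3 = 3 := by have := hk 0; rwa [h0] at this
  have h4 : k 4 = 4 := by have := hk 1; rwa [h1] at this
  have h5 : k 5 = tau (k 2) := hk 2
  have h2 : k 2 = 2 ∨ k 2 = 5 := by
    have e0 : k 2 ≠ 0 := h0 ▸ k.injective.ne (by decide)
    have e1 : k 2 ≠ 1 := h1 ▸ k.injective.ne (by decide)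
    have e3 : k 2 ≠ 3 := h3 ▸ k.injective.ne (by decide)
    have e4 : k 2 ≠ 4 := h4 ▸ k.injective.ne (by decide)
    revert e0 e1 e3 e4; generalize k 2 = a; revert a; decide
  rcases h2 with h2 | h2 <;> [left; right] <;> ext i <;> fin_cases i <;> simp_all [tau] <;> decide

lemma mem_G_or_mul_swap_mem_G {h : Perm (Fin 6)} (hh : h ∈ tauCentralizer) :
    h ∈ G ∨ h * swap 2 5 ∈ G := by
  have hcomm := mem_tauCentralizer_iff.mp hh
  obtain ⟨g, hg, hg0, hg1⟩ := exists_mem_G_apply_zero_apply_one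
    (h.injective.ne (by decide : (1 : Fin 6) ≠ 0))
    (hcomm 0 ▸ h.injective.ne (by decide : (1 : Fin 6) ≠ tau 0))
  have hk : g⁻¹ * h ∈ tauCentralizer := mul_mem (inv_mem (G_le_tauCentralizer hg)) hh
  rcases eq_one_or_eq_swap_of_apply_zero_of_apply_one hk (by simp [← hg0]) (by simp [← hg1]) with hk | hk
  · exact .inl (inv_mul_eq_one.mp hk ▸ hg)
  · right
    rwa [inv_mul_eq_iff_eq_mul.mp hk, mul_swap_mul_self]

lemma G_eq_tauCentralizer_inf_orientationPreserving :
    G = tauCentralizer ⊓ orientationPreserving := by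
  refine le_antisymm (le_inf G_le_tauCentralizer G_le_orientationPreserving) ?_
  intro h hmem
  obtain ⟨hK, hO⟩ := Subgroup.mem_inf.mp hmem
  refine (mem_G_or_mul_swap_mem_G hK).resolve_right fun hs => ?_
  have hswap : swap 2 5 ∈ orientationPreserving := by
    simpa using mul_mem (inv_mem hO) (G_le_orientationPreserving hs)
  exact absurd (mem_orientationPreserving_iff.mp hswap 0 1 2) (by decide)

lemma swap_tau_mul_swap_mem_G (i : Fin 6) : swap i (tau i) * swap 0 3 ∈ G := by
  rw [G_eq_tauCentralizer_inf_orientationPreserving]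
  refine ⟨mem_tauCentralizer_iff.mpr ?_, mem_orientationPreserving_iff.mpr ?_⟩ <;> revert i <;>
    decide

lemma mem_tauCentralizer_iff_mem_G_or_mul_swap_mem_G {k : Perm (Fin 6)} :
    k ∈ tauCentralizer ↔ k ∈ G ∨ k * swap 0 3 ∈ G := by
  have hswap : swap (0 : Fin 6) 3 ∈ tauCentralizer := mem_tauCentralizer_iff.mpr (by decide)
  constructor
  · intro hk
    refine (mem_G_or_mul_swap_mem_G hk).imp_right fun hs => ?_
    have hrot : swap 2 5 * swap 0 3 ∈ G := swap_tau_mul_swap_mem_G 2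
    simpa only [mul_assoc, swap_mul_self_mul] using mul_mem hs hrot
  · rintro (hk | hk)
    · exact G_le_tauCentralizer hk
    · simpa using mul_mem (G_le_tauCentralizer hk) hswap

lemma swap_zero_three_not_mem_G : swap (0 : Fin 6) 3 ∉ G := fun h =>
  absurd (mem_orientationPreserving_iff.mp (G_le_orientationPreserving h) 0 1 2) (by decide)

lemma oppPairs_mul (c : CCube) {g : Perm (Fin 6)} (hg : g ∈ tauCentralizer) :
    oppPairs (c * g) = oppPairs c := by
  have hfun : (fun i => ({(c * g) i, (c * g) (tau i)} : Finset (Fin 6))) =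
      (fun j => ({c j, c (tau j)} : Finset (Fin 6))) ∘ g := by
    funext i
    simp [mem_tauCentralizer_iff.mp hg i]
  rw [oppPairs, oppPairs, hfun, Finset.image_comp, Finset.image_univ_equiv]

lemma eq_tau_of_pair_mem_oppPairs (c : CCube) {a b : Fin 6}
    (h : ({c a, c b} : Finset (Fin 6)) ∈ oppPairs c) : b = tau a := by
  obtain ⟨j, -, hj⟩ := Finset.mem_image.mp h
  have hpair : ({j, tau j} : Set (Fin 6)) = {a, b} := by
    apply (Set.image_injective.mpr c.injective)
    simpa [Set.image_pair] using congrArg ((↑) : Finset (Fin 6) → Set (Fin 6)) hj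
  rcases Set.pair_eq_pair_iff.mp hpair with ⟨rfl, rfl⟩ | ⟨rfl, rfl⟩
  · rfl
  · exact (tau_tau j).symm

lemma oppPairs_eq_iff {c d : CCube} : oppPairs c = oppPairs d ↔ c⁻¹ * d ∈ tauCentralizer := by
  constructor
  · intro h
    refine mem_tauCentralizer_iff.mpr fun i => eq_tau_of_pair_mem_oppPairs c ?_
    have hd : ({d i, d (tau i)} : Finset (Fin 6)) ∈ oppPairs d :=
      Finset.mem_image_of_mem _ (Finset.mem_univ i)
    simpa [h] using hd
  · intro h
    rw [← oppPairs_mul c h, mul_inv_cancel_left]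

/-- For any colored cube `c` and any face `i`, the cube `c ∘ swap i (tau i)` has the same
variety as the mirror cube of `c`; two colored cubes have the same set of opposite pairs iff
one has the same variety as the other or as its mirror; and a cube never has the same variety
as its mirror cube. -/
theorem mirror_characterization :
    (∀ (c : CCube) (i : Fin 6), sameVariety (c * Equiv.swap i (tau i)) (mirror c)) ∧
    (∀ c d : CCube, oppPairs c = oppPairs d ↔ (sameVariety d c ∨ sameVariety d (mirror c))) ∧
    (∀ c : CCube, ¬ sameVariety c (mirror c)) := by
  refine ⟨fun c i => ?_, fun c d => ?_, fun c => ?_⟩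
  · rw [sameVariety_iff, mirror, mul_inv_rev, swap_inv, mul_assoc, inv_mul_cancel_left]
    exact swap_tau_mul_swap_mem_G i
  · rw [oppPairs_eq_iff, sameVariety_iff, sameVariety_iff, mirror, ← inv_mem_iff,
      mem_tauCentralizer_iff_mem_G_or_mul_swap_mem_G, mul_inv_rev, inv_inv, mul_assoc]
  · rw [sameVariety_iff, mirror, inv_mul_cancel_left]
    exact swap_zero_three_not_mem_G
end

section
/- For any two colored cubes c and d, the number of opposite pairs they share is 0, 1, or 3, and the number of adjacent pairs they share is exactly 9, 10, or 12 according to whether they share exactly 0, 1, or 3 opposite pairs, respectively. -/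
open scoped Classical

-- aux section
lemma oppPairs_mul' (c e : CCube) :
    oppPairs (c * e) = (oppPairs e).image (Finset.image ⇑c) := by
  unfold oppPairs
  rw [Finset.image_image]
  apply Finset.image_congr
  intro i _
  simp [Equiv.Perm.mul_apply, Finset.image_insert]

lemma adjPairs_mul' (c e : CCube) :
    adjPairs (c * e) = (adjPairs e).image (Finset.image ⇑c) := by
  unfold adjPairs
  rw [Finset.image_image]
  apply Finset.image_congr
  intro p _
  simp [Equiv.Perm.mul_apply, Finset.image_insert]

lemma oppPairs_eq_image' (c : CCube) :
    oppPairs c = (oppPairs 1).image (Finset.image ⇑c) := by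
  simpa using oppPairs_mul' c 1

lemma adjPairs_eq_image' (c : CCube) :
    adjPairs c = (adjPairs 1).image (Finset.image ⇑c) := by
  simpa using adjPairs_mul' c 1

noncomputable def allPairs : Finset (Finset (Fin 6)) :=
  (Finset.univ : Finset (Fin 6)).powersetCard 2

lemma image_allPairs (c : CCube) :
    allPairs.image (Finset.image ⇑c) = allPairs := by
  have hinj : Function.Injective (Finset.image ⇑c) :=
    Finset.image_injective c.injective
  apply Finset.eq_of_subset_of_card_le
  · intro s hs
    rcases Finset.mem_image.1 hs with ⟨t, ht, rfl⟩
    unfold allPairs at ht ⊢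
    rw [Finset.mem_powersetCard_univ] at ht ⊢
    rw [Finset.card_image_of_injective _ c.injective, ht]
  · rw [Finset.card_image_of_injective _ hinj]

lemma adj1_eq : adjPairs 1 = allPairs \ oppPairs 1 := by
  unfold adjPairs oppPairs allPairs; decide

lemma opp1_card : (oppPairs 1).card = 3 := by decide
lemma opp1_sub : oppPairs 1 ⊆ allPairs := by
  unfold oppPairs allPairs; decide

lemma adj_eq (c : CCube) : adjPairs c = allPairs \ oppPairs c := by
  rw [adjPairs_eq_image' c, adj1_eq,
    Finset.image_sdiff _ _ (Finset.image_injective c.injective),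
    image_allPairs, ← oppPairs_eq_image']

lemma opp_card (c : CCube) : (oppPairs c).card = 3 := by
  rw [oppPairs_eq_image' c,
    Finset.card_image_of_injective _ (Finset.image_injective c.injective), opp1_card]

lemma opp_sub (c : CCube) : oppPairs c ⊆ allPairs := by
  rw [oppPairs_eq_image' c]
  calc (oppPairs 1).image (Finset.image ⇑c)
      ⊆ allPairs.image (Finset.image ⇑c) := Finset.image_subset_image opp1_sub
    _ = allPairs := image_allPairs c

lemma allPairs_card : allPairs.card = 15 := by
  unfold allPairs; decide

set_option maxHeartbeats 4000000 in
set_option maxRecDepth 40000 in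
lemma key : ∀ e : CCube, (oppPairs 1 ∩ oppPairs e).card = 0 ∨
    (oppPairs 1 ∩ oppPairs e).card = 1 ∨ (oppPairs 1 ∩ oppPairs e).card = 3 := by
  decide


set_option maxHeartbeats 2000000 in
/-- Two colored cubes share 0, 1, or 3 opposite pairs, and share exactly 9, 10, or 12
adjacent pairs accordingly. -/
theorem shared_adjacent_pairs (c d : CCube) :
    ((oppPairs c ∩ oppPairs d).card = 0 ∨ (oppPairs c ∩ oppPairs d).card = 1 ∨
      (oppPairs c ∩ oppPairs d).card = 3) ∧
    ((oppPairs c ∩ oppPairs d).card = 0 → (adjPairs c ∩ adjPairs d).card = 9) ∧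
    ((oppPairs c ∩ oppPairs d).card = 1 → (adjPairs c ∩ adjPairs d).card = 10) ∧
    ((oppPairs c ∩ oppPairs d).card = 3 → (adjPairs c ∩ adjPairs d).card = 12) := by
  have hinj : Function.Injective (Finset.image ⇑c) :=
    Finset.image_injective c.injective
  -- transport opp intersection card
  have hd : d = c * (c⁻¹ * d) := by group
  have h1 : oppPairs c ∩ oppPairs d
      = (oppPairs 1 ∩ oppPairs (c⁻¹ * d)).image (Finset.image ⇑c) := by
    conv_lhs => rw [oppPairs_eq_image' c, hd, oppPairs_mul' c (c⁻¹ * d)]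
    rw [← Finset.image_inter _ _ hinj]
  have hk : (oppPairs c ∩ oppPairs d).card
      = (oppPairs 1 ∩ oppPairs (c⁻¹ * d)).card := by
    rw [h1, Finset.card_image_of_injective _ hinj]
  have hopp := key (c⁻¹ * d)
  rw [← hk] at hopp
  -- adjacency
  have hadj : adjPairs c ∩ adjPairs d = allPairs \ (oppPairs c ∪ oppPairs d) := by
    rw [adj_eq c, adj_eq d, ← Finset.sdiff_union_distrib]
  have hsub : oppPairs c ∪ oppPairs d ⊆ allPairs :=
    Finset.union_subset (opp_sub c) (opp_sub d)
  have hcard : (adjPairs c ∩ adjPairs d).card + (oppPairs c ∪ oppPairs d).card = 15 := by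
    rw [hadj, Finset.card_sdiff_add_card_eq_card hsub, allPairs_card]
  have hcu : (oppPairs c ∪ oppPairs d).card + (oppPairs c ∩ oppPairs d).card = 6 := by
    rw [Finset.card_union_add_card_inter, opp_card, opp_card]
  exact ⟨hopp, fun h => by omega, fun h => by omega, fun h => by omega⟩
end

section
/- The set P of synthematic totals has exactly six elements, and the natural action of Equiv.Perm (Fin 6) on P defines an injective (hence bijective, since both groups have order 720) group homomorphism σ : Equiv.Perm (Fin 6) → Equiv.Perm P. Moreover, for every bijection e : P ≃ Fin 6, the automorphism of Equiv.Perm (Fin 6) obtained by conjugating σ by e (i.e., g ↦ e ∘ σ(g) ∘ e⁻¹) is not an inner automorphism of Equiv.Perm (Fin 6). -/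
/-!
Synthemes and synthematic totals are exact covers (of `Fin 6` by three pairs, and of the fifteen
pairs by five synthemes), and a family of `m` blocks of size `k` exactly covers a set of size
`m * k` iff its union has full size. This turns both notions into finite filters, and
enumerating the second one finds six totals.

A transposition `(a b)` fixes no total: the syntheme `s` of the total through `{a, c}` shares
with `(a b) • s` its pair avoiding `a` and `b`, so the two coincide, yet `(a b) • s` contains
`{b, c}`. Hence conjugating `σ` by `e` sends `(0 1)`, which fixes `2`, to a permutation without
fixed points, which no inner automorphism does. The kernel of `σ` is normal in `S₆`, hence
trivial or containing `A₆`; it is trivial because a 3-cycle moves some total.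
-/

open Finset Equiv
open scoped Pointwise

/-- A syntheme: a partition of the six colors into three unordered pairs. -/
def IsSyntheme (s : Finset (Finset (Fin 6))) : Prop :=
  s.card = 3 ∧ (∀ p ∈ s, p.card = 2) ∧ ∀ i : Fin 6, ∃! p, p ∈ s ∧ i ∈ p

/-- A synthematic total: a set of five synthemes such that each of the fifteen unordered
pairs of colors belongs to exactly one of the five synthemes. -/
def IsSynTotal (t : Finset (Finset (Finset (Fin 6)))) : Prop :=
  t.card = 5 ∧ (∀ s ∈ t, IsSyntheme s) ∧
    ∀ p : Finset (Fin 6), p.card = 2 → ∃! s, s ∈ t ∧ p ∈ s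

/-- The set of synthematic totals. -/
def SynTotal := {t : Finset (Finset (Finset (Fin 6))) // IsSynTotal t}

theorem Finset.pairwiseDisjoint_of_card_biUnion_eq_sum {ι α : Type*} [DecidableEq ι]
    [DecidableEq α] {s : Finset ι} {f : ι → Finset α}
    (h : (s.biUnion f).card = ∑ i ∈ s, (f i).card) : (s : Set ι).PairwiseDisjoint f := by
  intro i hi j hj hij
  rw [Function.onFun, disjoint_iff_inter_eq_empty, ← card_eq_zero]
  have hsplit : s.biUnion f = f i ∪ (s.erase i).biUnion f := by
    rw [← biUnion_insert, insert_erase hi]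
  have hsub : f j ⊆ (s.erase i).biUnion f :=
    subset_biUnion_of_mem f (mem_erase.2 ⟨Ne.symm hij, hj⟩)
  have hunion := card_union_add_card_inter (f i) ((s.erase i).biUnion f)
  have hle := card_le_card (inter_subset_inter_left (s := f i) hsub)
  have hrest := card_biUnion_le (s := s.erase i) (t := f)
  rw [← add_sum_erase s _ hi, hsplit] at h
  omega

theorem Finset.existsUnique_mem_iff_card_biUnion {α : Type*} [DecidableEq α] {U : Finset α}
    {F : Finset (Finset α)} {k : ℕ} (hF : F ⊆ U.powersetCard k) (hcard : F.card * k = U.card) :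
    (∀ x ∈ U, ∃! s, s ∈ F ∧ x ∈ s) ↔ (F.biUnion id).card = U.card := by
  have hsubU : F.biUnion id ⊆ U :=
    biUnion_subset.2 fun s hs => (mem_powersetCard.1 (hF hs)).1
  constructor
  · intro hcov
    refine congrArg card (Subset.antisymm hsubU fun x hx => ?_)
    obtain ⟨s, ⟨hs, hxs⟩, -⟩ := hcov x hx
    exact mem_biUnion.2 ⟨s, hs, hxs⟩
  · intro hcardU x hx
    have hcover : F.biUnion id = U := eq_of_subset_of_card_le hsubU hcardU.ge
    obtain ⟨s, hs, hxs⟩ := mem_biUnion.1 (hcover ▸ hx)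
    have hdisj : (F : Set (Finset α)).PairwiseDisjoint id := by
      refine pairwiseDisjoint_of_card_biUnion_eq_sum ?_
      rw [hcardU, ← hcard]
      exact (sum_const_nat fun s hs => (mem_powersetCard.1 (hF hs)).2).symm
    exact ⟨s, ⟨hs, hxs⟩, fun s' ⟨hs', hxs'⟩ => hdisj.elim_finset hs' hs x hxs' hxs⟩

theorem Finset.existsUnique_mem_smul_finset_iff {G α : Type*} [Group G] [MulAction G α]
    [DecidableEq α] (g : G) (F : Finset (Finset α)) (x : α) :
    (∃! s, s ∈ g • F ∧ x ∈ s) ↔ ∃! s, s ∈ F ∧ g⁻¹ • x ∈ s := by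
  refine ((MulAction.toPerm g : Perm (Finset α)).existsUnique_congr_right).symm.trans
    (existsUnique_congr fun s => ?_)
  simp [smul_mem_smul_finset_iff, inv_smul_mem_iff]

theorem Equiv.Perm.permCongr_ne_conj {α β : Type*} (e : β ≃ α) {f : Perm β} (hf : ∀ y, f y ≠ y)
    {g : Perm α} {x : α} (hx : g x = x) (h : Perm α) : e.permCongr f ≠ h * g * h⁻¹ := by
  intro heq
  apply hf (e.symm (h x))
  apply e.injective
  simpa [Equiv.permCongr_apply, hx] using congrArg (· (h x)) heq

theorem Equiv.Perm.injective_toPermHom_of_smul_ne {α X : Type*} [DecidableEq α] [Fintype α]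
    [MulAction (Perm α) X] (hα : 5 ≤ Nat.card α) {g : Perm α} (hg : g ∈ alternatingGroup α)
    {x : X} (hgx : g • x ≠ x) : Function.Injective (MulAction.toPermHom (Perm α) X) := by
  rw [← MonoidHom.ker_eq_bot_iff]
  by_contra hne
  have hA := Equiv.Perm.alternatingGroup_le_of_normal hα ((Subgroup.nontrivial_iff_ne_bot _).2 hne)
  exact hgx (congrArg (· x) (MonoidHom.mem_ker.1 (hA hg)))

theorem IsSyntheme.smul {s : Finset (Finset (Fin 6))} (hs : IsSyntheme s) (π : Perm (Fin 6)) :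
    IsSyntheme (π • s) := by
  obtain ⟨hcard, hpairs, hcov⟩ := hs
  refine ⟨by rw [card_smul_finset, hcard], fun p hp => ?_, fun i => ?_⟩
  · obtain ⟨q, hq, rfl⟩ := mem_smul_finset.1 hp
    rw [card_smul_finset, hpairs q hq]
  · rw [existsUnique_mem_smul_finset_iff]
    exact hcov _

theorem IsSynTotal.smul {t : Finset (Finset (Finset (Fin 6)))} (ht : IsSynTotal t)
    (π : Perm (Fin 6)) : IsSynTotal (π • t) := by
  obtain ⟨hcard, hsyn, hcov⟩ := ht
  refine ⟨by rw [card_smul_finset, hcard], fun s hs => ?_, fun p hp => ?_⟩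
  · obtain ⟨s', hs', rfl⟩ := mem_smul_finset.1 hs
    exact (hsyn s' hs').smul π
  · rw [existsUnique_mem_smul_finset_iff]
    exact hcov _ (by rw [card_smul_finset, hp])

def pairs : Finset (Finset (Fin 6)) := univ.powersetCard 2

def synthemes : Finset (Finset (Finset (Fin 6))) :=
  (pairs.powersetCard 3).filter fun s => (s.biUnion id).card = 6

def synTotals : Finset (Finset (Finset (Finset (Fin 6)))) :=
  (synthemes.powersetCard 5).filter fun t => (t.biUnion id).card = 15

theorem isSyntheme_iff_mem_synthemes (s : Finset (Finset (Fin 6))) :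
    IsSyntheme s ↔ s ∈ synthemes := by
  have hpairs : (∀ p ∈ s, p.card = 2) ↔ s ⊆ univ.powersetCard 2 := by
    simp only [subset_iff, mem_powersetCard_univ]
  rw [IsSyntheme, synthemes, mem_filter, mem_powersetCard, pairs, hpairs]
  constructor
  · rintro ⟨hcard, hsub, hcov⟩
    exact ⟨⟨hsub, hcard⟩, (existsUnique_mem_iff_card_biUnion hsub (by simp [hcard])).1
      fun i _ => hcov i⟩
  · rintro ⟨⟨hsub, hcard⟩, hunion⟩
    exact ⟨hcard, hsub, fun i => (existsUnique_mem_iff_card_biUnion hsub (by simp [hcard])).2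
      hunion i (mem_univ i)⟩

theorem isSynTotal_iff_mem_synTotals (t : Finset (Finset (Finset (Fin 6)))) :
    IsSynTotal t ↔ t ∈ synTotals := by
  have hsyn : (∀ s ∈ t, IsSyntheme s) ↔ t ⊆ synthemes := by
    simp only [subset_iff, isSyntheme_iff_mem_synthemes]
  have hcov : (∀ p : Finset (Fin 6), p.card = 2 → ∃! s, s ∈ t ∧ p ∈ s) ↔
      ∀ p ∈ pairs, ∃! s, s ∈ t ∧ p ∈ s := by
    simp only [pairs, mem_powersetCard_univ]
  have hcard : pairs.card = 15 := by decide
  rw [IsSynTotal, synTotals, mem_filter, mem_powersetCard, hsyn, hcov, ← hcard]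
  constructor
  · rintro ⟨h5, hsub, hcov⟩
    exact ⟨⟨hsub, h5⟩, (existsUnique_mem_iff_card_biUnion (hsub.trans (filter_subset _ _))
      (by rw [h5, hcard])).1 hcov⟩
  · rintro ⟨⟨hsub, h5⟩, hunion⟩
    exact ⟨h5, hsub, (existsUnique_mem_iff_card_biUnion (hsub.trans (filter_subset _ _))
      (by rw [h5, hcard])).2 hunion⟩

theorem card_synTotals : synTotals.card = 6 := by decide +kernel

theorem IsSyntheme.exists_mem_notMem_notMem {s : Finset (Finset (Fin 6))} (hs : IsSyntheme s)
    (a b : Fin 6) : ∃ q ∈ s, a ∉ q ∧ b ∉ q := by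
  obtain ⟨pa, -, hpa⟩ := hs.2.2 a
  obtain ⟨pb, -, hpb⟩ := hs.2.2 b
  obtain ⟨q, hq, hqa, hqb⟩ : ∃ q ∈ s, q ≠ pa ∧ q ≠ pb := by
    by_contra! h
    have hsub : s ⊆ {pa, pb} := fun q hq => by
      by_cases hqa : q = pa
      · simp [hqa]
      · simp [h q hq hqa]
    have := (card_le_card hsub).trans (card_insert_le pa {pb})
    rw [hs.1, card_singleton] at this
    omega
  exact ⟨q, hq, fun ha => hqa (hpa q ⟨hq, ha⟩), fun hb => hqb (hpb q ⟨hq, hb⟩)⟩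

theorem Finset.swap_smul_eq_self {α : Type*} [DecidableEq α] {a b : α} {q : Finset α}
    (ha : a ∉ q) (hb : b ∉ q) : swap a b • q = q := by
  rw [smul_finset_def]
  exact (image_congr fun x hx => swap_apply_of_ne_of_ne (ne_of_mem_of_not_mem hx ha)
    (ne_of_mem_of_not_mem hx hb)).trans image_id'

theorem IsSynTotal.swap_smul_ne {t : Finset (Finset (Finset (Fin 6)))} (ht : IsSynTotal t)
    {a b : Fin 6} (hab : a ≠ b) : swap a b • t ≠ t := by
  intro hfix
  obtain ⟨-, hsyn, hcov⟩ := ht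
  obtain ⟨c, -, hc⟩ := exists_mem_notMem_of_card_lt_card (s := {a, b}) (t := univ)
    (card_le_two.trans_lt (by simp))
  obtain ⟨hca, hcb⟩ : c ≠ a ∧ c ≠ b := by simpa [not_or] using hc
  obtain ⟨s, ⟨hs, hac⟩, -⟩ := hcov {a, c} (card_pair hca.symm)
  have hτs : swap a b • s ∈ t := hfix ▸ smul_mem_smul_finset hs
  obtain ⟨q, hq, hqa, hqb⟩ := (hsyn s hs).exists_mem_notMem_notMem a b
  have hqτ : q ∈ swap a b • s := swap_smul_eq_self hqa hqb ▸ smul_mem_smul_finset hq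
  obtain ⟨_, -, hu⟩ := hcov q ((hsyn s hs).2.1 q hq)
  have hτs_eq : swap a b • s = s := (hu _ ⟨hτs, hqτ⟩).trans (hu s ⟨hs, hq⟩).symm
  have hbc : ({b, c} : Finset (Fin 6)) ∈ s := by
    have : swap a b • ({a, c} : Finset (Fin 6)) = {b, c} := by
      simp [smul_finset_def, image_insert, swap_apply_of_ne_of_ne hca hcb]
    rw [← hτs_eq, ← this]
    exact smul_mem_smul_finset hac
  obtain ⟨_, -, hr⟩ := (hsyn s hs).2.2 c
  have hacbc : ({a, c} : Finset (Fin 6)) = {b, c} :=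
    (hr _ ⟨hac, by simp⟩).trans (hr _ ⟨hbc, by simp⟩).symm
  have ha : a ∈ ({b, c} : Finset (Fin 6)) := hacbc ▸ mem_insert_self a {c}
  simp [hab, hca.symm] at ha

namespace SynTotal

instance : MulAction (Perm (Fin 6)) SynTotal where
  smul π t := ⟨π • t.1, t.2.smul π⟩
  one_smul t := Subtype.ext (one_smul _ t.1)
  mul_smul π ρ t := Subtype.ext (mul_smul π ρ t.1)

theorem natCard_eq : Nat.card SynTotal = 6 := by
  rw [← card_synTotals, ← Nat.card_eq_finsetCard]
  exact Nat.card_congr (Equiv.subtypeEquivRight isSynTotal_iff_mem_synTotals)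

theorem swap_smul_ne (t : SynTotal) {a b : Fin 6} (hab : a ≠ b) : swap a b • t ≠ t :=
  fun hfix => t.2.swap_smul_ne hab (congrArg Subtype.val hfix)

theorem exists_smul_ne : ∃ t : SynTotal, (swap (0 : Fin 6) 1 * swap 0 2) • t ≠ t := by
  let t : Finset (Finset (Finset (Fin 6))) := {{{0,1},{2,3},{4,5}}, {{0,2},{1,4},{3,5}},
    {{0,3},{1,5},{2,4}}, {{0,4},{1,3},{2,5}}, {{0,5},{1,2},{3,4}}}
  have ht : IsSynTotal t := by
    rw [isSynTotal_iff_mem_synTotals, synTotals, mem_filter, mem_powersetCard]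
    decide +kernel
  have hmove : (swap (0 : Fin 6) 1 * swap 0 2) • t ≠ t := by
    simp only [t, smul_finset_def, Perm.smul_def]
    decide +kernel
  exact ⟨⟨t, ht⟩, fun h => hmove (congrArg Subtype.val h)⟩

end SynTotal

/-- There are exactly six synthematic totals; the natural action of `Equiv.Perm (Fin 6)` on
them gives an injective homomorphism `σ` into `Equiv.Perm SynTotal`; and for every bijection
`e : SynTotal ≃ Fin 6`, the automorphism `g ↦ e ∘ σ g ∘ e⁻¹` of `Equiv.Perm (Fin 6)` is not
inner. -/
theorem synthematic_totals_outer :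
    Nat.card SynTotal = 6 ∧
    ∃ σ : Equiv.Perm (Fin 6) →* Equiv.Perm SynTotal,
      (∀ (π : Equiv.Perm (Fin 6)) (t : SynTotal),
        ((σ π) t).val = t.val.image (fun s => s.image (fun p => p.image π))) ∧
      Function.Injective σ ∧
      ∀ e : SynTotal ≃ Fin 6,
        ¬ ∃ h : Equiv.Perm (Fin 6), ∀ g : Equiv.Perm (Fin 6),
          (Equiv.permCongr e) (σ g) = h * g * h⁻¹ := by
  refine ⟨SynTotal.natCard_eq, MulAction.toPermHom _ _, fun π t => rfl, ?_, ?_⟩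
  · obtain ⟨t, ht⟩ := SynTotal.exists_smul_ne
    exact Perm.injective_toPermHom_of_smul_ne (by simp) (by simp [Perm.mem_alternatingGroup]) ht
  · rintro e ⟨h, hh⟩
    exact Perm.permCongr_ne_conj e (fun t => t.swap_smul_ne zero_ne_one) (x := 2) (by decide) h
      (hh (swap 0 1))
end

section
/- Let v be a variety, let n ≥ 2 be an integer, and let k ∈ {9, 10, 12}. Suppose T is a multiset of k(n − 2) colored cubes each of which has at least k of the twelve adjacent pairs of v among its own adjacent pairs. Then there is an assignment of every cube of T to one of the twelve adjacent pairs of v such that each cube is assigned an adjacent pair that it possesses and each of the twelve adjacent pairs is assigned at most n − 2 cubes. -/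
open scoped Classical

lemma card_finset_sum {α β : Type*} (s : Finset α) (f : α → Multiset β) :
    Multiset.card (s.sum f) = ∑ a ∈ s, Multiset.card (f a) := by
  classical
  induction s using Finset.cons_induction with
  | empty => simp
  | cons a s h ih => simp [Finset.sum_cons, ih]

lemma greedy_assign (v : Variety) (m k : ℕ) (hk : 1 ≤ k) :
    ∀ T : Multiset CCube, Multiset.card T ≤ k * m →
      (∀ x ∈ T, k ≤ (vAdj v ∩ adjPairs x).card) →
      ∃ f : Finset (Fin 6) → Multiset CCube,
        T = (vAdj v).sum f ∧
        ∀ p ∈ vAdj v, Multiset.card (f p) ≤ m ∧ ∀ x ∈ f p, p ∈ adjPairs x := by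
  intro T
  induction T using Multiset.induction with
  | empty =>
    intro _ _
    exact ⟨fun _ => 0, by simp, fun p _ => ⟨by simp, by simp⟩⟩
  | cons a s ih =>
    intro hcard hshare
    obtain ⟨f, hsum, hf⟩ := ih (by simp at hcard; omega)
      (fun x hx => hshare x (Multiset.mem_cons_of_mem hx))
    -- find a pair p0 in the intersection with card (f p0) < m
    have hcards : Multiset.card s = ∑ p ∈ vAdj v, Multiset.card (f p) := by
      rw [hsum, card_finset_sum]
    have hEx : ∃ p ∈ vAdj v ∩ adjPairs a, Multiset.card (f p) < m := by
      by_contra h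
      push_neg at h
      have h1 : k * m ≤ ∑ p ∈ vAdj v ∩ adjPairs a, Multiset.card (f p) := by
        calc k * m ≤ (vAdj v ∩ adjPairs a).card * m :=
              Nat.mul_le_mul_right m (hshare a (Multiset.mem_cons_self a s))
          _ ≤ ∑ p ∈ vAdj v ∩ adjPairs a, Multiset.card (f p) := by
              simpa using Finset.card_nsmul_le_sum _ _ _ h
      have h2 : ∑ p ∈ vAdj v ∩ adjPairs a, Multiset.card (f p)
          ≤ ∑ p ∈ vAdj v, Multiset.card (f p) :=
        Finset.sum_le_sum_of_subset (Finset.inter_subset_left)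
      have h3 : Multiset.card (a ::ₘ s) = Multiset.card s + 1 := by simp
      omega
    obtain ⟨p0, hp0, hlt⟩ := hEx
    have hp0v : p0 ∈ vAdj v := Finset.mem_of_mem_inter_left hp0
    have hp0a : p0 ∈ adjPairs a := Finset.mem_of_mem_inter_right hp0
    refine ⟨Function.update f p0 (a ::ₘ f p0), ?_, ?_⟩
    · rw [Finset.sum_update_of_mem hp0v]
      rw [hsum, ← Finset.add_sum_erase _ f hp0v]
      rw [Multiset.cons_add, Finset.erase_eq]
    · intro p hp
      rcases eq_or_ne p p0 with rfl | hne
      · simp only [Function.update_self]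
        constructor
        · simpa using hlt
        · intro x hx
          rcases Multiset.mem_cons.mp hx with rfl | hx
          · exact hp0a
          · exact (hf p hp).2 x hx
      · rw [Function.update_of_ne hne]
        exact hf p hp

/-- If `k ∈ {9, 10, 12}` and `T` consists of `k(n-2)` cubes each sharing at least `k`
adjacent pairs with the variety `v`, then the cubes of `T` can be assigned to adjacent pairs
of `v` that they possess, with at most `n - 2` cubes per adjacent pair. -/
theorem frame_extension (v : Variety) (n k : ℕ) (hn : 2 ≤ n)
    (hk : k = 9 ∨ k = 10 ∨ k = 12)
    (T : Multiset CCube) (hcard : Multiset.card T = k * (n - 2))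
    (hshare : ∀ x ∈ T, k ≤ (vAdj v ∩ adjPairs x).card) :
    ∃ f : Finset (Fin 6) → Multiset CCube,
      T = (vAdj v).sum f ∧
      ∀ p ∈ vAdj v, Multiset.card (f p) ≤ n - 2 ∧ ∀ x ∈ f p, p ∈ adjPairs x := by
  obtain ⟨f, h1, h2⟩ := greedy_assign v (n-2) k (by omega) T (le_of_eq hcard) hshare
  exact ⟨f, h1, h2⟩
end

section
/- Fix an unordered pair {a, b} of distinct colors and let v be one of the six varieties having {a, b} as an opposite pair. Then v shares no corner triples with its mirror variety v* (which is also one of the six); v shares exactly two corner triples with each of the other four varieties among the six; and the four two-element sets of corner triples so shared are pairwise disjoint. -/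
open scoped Classical

/-! Relabeling the colors, `c ↦ σ * c`, commutes with rotations (which act on the right) and
with mirroring, and acts injectively on corner triples. Rotating a representative of `v` so
that `a` sits on face `0` and `b` on face `3`, and relabeling by its inverse, we may therefore
take `v` to be the variety of the identity cube and `{a, b} = {0, 3}`. A rotation about the
axis through faces `0, 3` then brings any cube with opposite pair `{0, 3}` to one with colors
`0, 1, 3` on faces `0, 1, 3`; there are six such cubes, and the claims become a finite
computation over them. -/

open Equiv Finset

/-- Every rotation is `r1 ^ i * r2 ^ j * r1 ^ k` (Euler angles). -/
def rotations : Finset CCube :=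
  image (fun p : Fin 4 × Fin 4 × Fin 4 => r1 ^ (p.1 : ℕ) * r2 ^ (p.2.1 : ℕ) * r1 ^ (p.2.2 : ℕ))
    univ

theorem mem_G_iff_mem_rotations {g : CCube} : g ∈ G ↔ g ∈ rotations := by
  have hr1 : r1 ∈ G := Subgroup.subset_closure (Set.mem_insert _ _)
  have hr2 : r2 ∈ G := Subgroup.subset_closure (Set.mem_insert_of_mem _ rfl)
  constructor
  · have hclosed : ∀ x ∈ rotations, ∀ y ∈ ({r1, r2} : Set CCube),
        x * y ∈ rotations ∧ x * y⁻¹ ∈ rotations := by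
      simp only [Set.mem_insert_iff, Set.mem_singleton_iff, forall_eq_or_imp, forall_eq]
      decide +kernel
    intro hg
    refine Subgroup.closure_induction_right (by decide +kernel)
      (fun x _ y hy hx => (hclosed x hx y hy).1) (fun x _ y hy hx => (hclosed x hx y hy).2) hg
  · intro hg
    obtain ⟨⟨i, j, k⟩, -, rfl⟩ := mem_image.1 hg
    exact mul_mem (mul_mem (pow_mem hr1 _) (pow_mem hr2 _)) (pow_mem hr1 _)

theorem apply_tau_of_mem_G {g : CCube} (hg : g ∈ G) (i : Fin 6) : g (tau i) = tau (g i) := by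
  have : ∀ g ∈ rotations, ∀ i, g (tau i) = tau (g i) := by decide +kernel
  exact this g (mem_G_iff_mem_rotations.1 hg) i

theorem exists_mem_G_apply_zero_apply_three (i : Fin 6) : ∃ g ∈ G, g 0 = i ∧ g 3 = tau i := by
  have : ∀ i, ∃ g ∈ rotations, g 0 = i ∧ g 3 = tau i := by decide +kernel
  simpa only [mem_G_iff_mem_rotations] using this i

theorem swap_mul_mul_swap_mem_G {g : CCube} (hg : g ∈ G) : swap 0 3 * g * swap 0 3 ∈ G := by
  have : ∀ g ∈ rotations, swap 0 3 * g * swap 0 3 ∈ rotations := by decide +kernel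
  simpa only [mem_G_iff_mem_rotations] using this g (mem_G_iff_mem_rotations.1 hg)

theorem sameVariety_iff_exists_rotations {c d : CCube} :
    sameVariety c d ↔ ∃ g ∈ rotations, d = c * g := by
  simp only [sameVariety, mem_G_iff_mem_rotations]

instance (c d : CCube) : Decidable (sameVariety c d) :=
  decidable_of_iff _ sameVariety_iff_exists_rotations.symm

theorem mem_oppPairs {c : CCube} {p : Finset (Fin 6)} :
    p ∈ oppPairs c ↔ ∃ i, ({c i, c (tau i)} : Finset (Fin 6)) = p := by
  simp [oppPairs]

theorem oppPairs_mul_of_apply_tau {c s : CCube} (hs : ∀ i, s (tau i) = tau (s i)) :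
    oppPairs (c * s) = oppPairs c := by
  simp only [oppPairs, Perm.mul_apply, hs]
  conv_rhs => rw [← image_univ_of_surjective s.surjective, image_image]
  rfl

theorem oppPairs_mirror (c : CCube) : oppPairs (mirror c) = oppPairs c :=
  oppPairs_mul_of_apply_tau (by decide)

theorem mem_oppPairs_mul_left {σ c : CCube} {p : Finset (Fin 6)} (hp : p ∈ oppPairs c) :
    p.image σ ∈ oppPairs (σ * c) := by
  obtain ⟨i, rfl⟩ := mem_oppPairs.1 hp
  exact mem_oppPairs.2 ⟨i, by simp [image_insert]⟩

theorem exists_mul_apply_zero_apply_three {d : CCube} {a b : Fin 6}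
    (h : ({a, b} : Finset (Fin 6)) ∈ oppPairs d) :
    ∃ g ∈ G, (d * g) 0 = a ∧ (d * g) 3 = b := by
  obtain ⟨i, hi⟩ := mem_oppPairs.1 h
  rw [← coe_inj, coe_pair, coe_pair, Set.pair_eq_pair_iff] at hi
  have htau : ∀ i, tau (tau i) = i := by decide
  rcases hi with ⟨hia, hib⟩ | ⟨hib, hia⟩
  · obtain ⟨g, hg, hg0, hg3⟩ := exists_mem_G_apply_zero_apply_three i
    exact ⟨g, hg, by simp [hg0, hia], by simp [hg3, hib]⟩
  · obtain ⟨g, hg, hg0, hg3⟩ := exists_mem_G_apply_zero_apply_three (tau i)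
    exact ⟨g, hg, by simp [hg0, hia], by simp [hg3, htau, hib]⟩

theorem mem_cornerTriples {c : CCube} {s : Finset (Fin 6 × Fin 6 × Fin 6)} :
    s ∈ cornerTriples c ↔ ∃ g ∈ G, s = cycClass (c (g 0), c (g 1), c (g 2)) := by
  simp [cornerTriples]

theorem cornerTriples_eq_image (c : CCube) :
    cornerTriples c = rotations.image fun g => cycClass (c (g 0), c (g 1), c (g 2)) := by
  ext s
  simp only [mem_cornerTriples, mem_image, mem_G_iff_mem_rotations, eq_comm]

theorem cornerTriples_mul_of_mem_G {c g : CCube} (hg : g ∈ G) :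
    cornerTriples (c * g) = cornerTriples c := by
  ext s
  simp only [mem_cornerTriples]
  constructor
  · rintro ⟨h, hh, rfl⟩
    exact ⟨g * h, G.mul_mem hg hh, rfl⟩
  · rintro ⟨h, hh, rfl⟩
    exact ⟨g⁻¹ * h, G.mul_mem (G.inv_mem hg) hh, by simp⟩

abbrev tripleMap (σ : CCube) : Fin 6 × Fin 6 × Fin 6 → Fin 6 × Fin 6 × Fin 6 :=
  Prod.map σ (Prod.map σ σ)

theorem tripleMap_injective (σ : CCube) : Function.Injective (tripleMap σ) :=
  σ.injective.prodMap (σ.injective.prodMap σ.injective)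

theorem cycClass_tripleMap (σ : CCube) (t : Fin 6 × Fin 6 × Fin 6) :
    cycClass (tripleMap σ t) = (cycClass t).image (tripleMap σ) := by
  simp [cycClass, cyc, image_insert]

theorem cornerTriples_mul_left (σ c : CCube) :
    cornerTriples (σ * c) = (cornerTriples c).image (image (tripleMap σ)) := by
  simp only [cornerTriples_eq_image, image_image]
  congr 1
  funext g
  exact cycClass_tripleMap σ (c (g 0), c (g 1), c (g 2))

theorem inter_cornerTriples_mul_left (σ c d : CCube) :
    cornerTriples (σ * c) ∩ cornerTriples (σ * d) =
      (cornerTriples c ∩ cornerTriples d).image (image (tripleMap σ)) := by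
  rw [cornerTriples_mul_left, cornerTriples_mul_left,
    image_inter _ _ (image_injective (tripleMap_injective σ))]

theorem sameVariety_mul_left_iff {σ c d : CCube} :
    sameVariety (σ * c) (σ * d) ↔ sameVariety c d := by
  simp only [sameVariety, mul_assoc, mul_right_inj]

theorem sameVariety.mirror {c d : CCube} (h : sameVariety c d) :
    sameVariety (mirror c) (mirror d) := by
  obtain ⟨g, hg, rfl⟩ := h
  refine ⟨_, swap_mul_mul_swap_mem_G hg, ?_⟩
  simp only [_root_.mirror, mul_assoc, swap_mul_self_mul]

def pinnedCubes : Finset CCube := univ.filter fun d => d 0 = 0 ∧ d 1 = 1 ∧ d 3 = 3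

theorem exists_mul_mem_pinnedCubes {d : CCube} (h0 : d 0 = 0) (h3 : d 3 = 3) :
    ∃ g ∈ G, d * g ∈ pinnedCubes := by
  have hturn : ∀ j : Fin 6, j ≠ 0 → j ≠ 3 → ∃ g ∈ rotations, g 0 = 0 ∧ g 1 = j ∧ g 3 = 3 := by
    decide +kernel
  have hj : d (d⁻¹ 1) = 1 := d.apply_symm_apply 1
  obtain ⟨g, hg, hg0, hg1, hg3⟩ := hturn (d⁻¹ 1)
    (by rintro h; simp [h, h0] at hj) (by rintro h; simp [h, h3] at hj)
  exact ⟨g, mem_G_iff_mem_rotations.2 hg, by simp [pinnedCubes, hg0, hg1, hg3, h0, h3]⟩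

theorem cornerTriples_one_inter_swap : cornerTriples 1 ∩ cornerTriples (swap 0 3) = ∅ := by
  -- `cornerTriples` filters all sets of triples, far too many to decide over; use the image form
  simp only [cornerTriples_eq_image]
  decide +kernel

theorem card_cornerTriples_one_inter :
    ∀ d ∈ pinnedCubes, ¬ sameVariety d 1 → ¬ sameVariety d (swap 0 3) →
      (cornerTriples 1 ∩ cornerTriples d).card = 2 := by
  simp only [cornerTriples_eq_image]
  decide +kernel

theorem cornerTriples_one_inter_inter :
    ∀ d ∈ pinnedCubes, ∀ d' ∈ pinnedCubes, ¬ sameVariety d 1 → ¬ sameVariety d (swap 0 3) →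
      ¬ sameVariety d' 1 → ¬ sameVariety d' (swap 0 3) → ¬ sameVariety d d' →
      (cornerTriples 1 ∩ cornerTriples d) ∩ (cornerTriples 1 ∩ cornerTriples d') = ∅ := by
  simp only [cornerTriples_eq_image]
  decide +kernel

theorem cornerTriples_inter_mirror (m : CCube) :
    cornerTriples m ∩ cornerTriples (mirror m) = ∅ := by
  have h := inter_cornerTriples_mul_left m 1 (swap 0 3)
  rwa [mul_one, cornerTriples_one_inter_swap, image_empty] at h

theorem card_cornerTriples_inter {m d : CCube} (hd : d ∈ pinnedCubes)
    (hm : ¬ sameVariety (m * d) m) (hm' : ¬ sameVariety (m * d) (mirror m)) :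
    (cornerTriples m ∩ cornerTriples (m * d)).card = 2 := by
  have h := inter_cornerTriples_mul_left m 1 d
  rw [mul_one] at h
  rw [h, card_image_of_injective _ (image_injective (tripleMap_injective m))]
  refine card_cornerTriples_one_inter d hd (mt (sameVariety_mul_left_iff (σ := m)).2 ?_)
    (mt (sameVariety_mul_left_iff (σ := m)).2 hm')
  rwa [mul_one]

theorem cornerTriples_inter_inter {m d d' : CCube} (hd : d ∈ pinnedCubes) (hd' : d' ∈ pinnedCubes)
    (hm : ¬ sameVariety (m * d) m) (hm' : ¬ sameVariety (m * d) (mirror m))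
    (hm₁ : ¬ sameVariety (m * d') m) (hm₁' : ¬ sameVariety (m * d') (mirror m))
    (hdd' : ¬ sameVariety (m * d) (m * d')) :
    (cornerTriples m ∩ cornerTriples (m * d)) ∩ (cornerTriples m ∩ cornerTriples (m * d')) = ∅ := by
  have h := inter_cornerTriples_mul_left m 1
  rw [mul_one] at h
  rw [h, h, ← image_inter _ _ (image_injective (tripleMap_injective m)), image_eq_empty]
  have cancel {x y : CCube} : ¬ sameVariety (m * x) (m * y) → ¬ sameVariety x y :=
    mt sameVariety_mul_left_iff.2
  exact cornerTriples_one_inter_inter d hd d' hd' (cancel (by rwa [mul_one])) (cancel hm')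
    (cancel (by rwa [mul_one])) (cancel hm₁') (cancel hdd')

theorem varietyOf_eq_varietyOf {c d : CCube} : varietyOf c = varietyOf d ↔ sameVariety c d :=
  Quotient.eq

theorem oppPairs_eq_of_sameVariety {c d : CCube} (h : sameVariety c d) :
    oppPairs d = oppPairs c := by
  obtain ⟨g, hg, rfl⟩ := h
  exact oppPairs_mul_of_apply_tau (apply_tau_of_mem_G hg)

theorem cornerTriples_eq_of_sameVariety {c d : CCube} (h : sameVariety c d) :
    cornerTriples d = cornerTriples c := by
  obtain ⟨g, hg, rfl⟩ := h
  exact cornerTriples_mul_of_mem_G hg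

theorem sameVariety_out_varietyOf (c : CCube) : sameVariety (varietyOf c).out c :=
  Quotient.mk_out (s := varietySetoid) c

theorem vOpp_varietyOf (c : CCube) : vOpp (varietyOf c) = oppPairs c :=
  (oppPairs_eq_of_sameVariety (sameVariety_out_varietyOf c)).symm

theorem vCorners_varietyOf (c : CCube) : vCorners (varietyOf c) = cornerTriples c :=
  (cornerTriples_eq_of_sameVariety (sameVariety_out_varietyOf c)).symm

theorem vMirror_varietyOf (c : CCube) : vMirror (varietyOf c) = varietyOf (mirror c) :=
  Quotient.sound (sameVariety_out_varietyOf c).mirror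

theorem exists_eq_varietyOf_of_mem_vOpp {a b : Fin 6} {v : Variety}
    (hv : ({a, b} : Finset (Fin 6)) ∈ vOpp v) : ∃ m, v = varietyOf m ∧ m 0 = a ∧ m 3 = b := by
  obtain ⟨g, hg, h0, h3⟩ := exists_mul_apply_zero_apply_three hv
  exact ⟨_, (Quotient.out_eq v).symm.trans (Quotient.sound ⟨g, hg, rfl⟩), h0, h3⟩

theorem exists_mem_pinnedCubes_of_mem_vOpp {m : CCube} {w : Variety}
    (hw : ({m 0, m 3} : Finset (Fin 6)) ∈ vOpp w) :
    ∃ d ∈ pinnedCubes, w = varietyOf (m * d) := by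
  have h03 : ({0, 3} : Finset (Fin 6)) ∈ oppPairs (m⁻¹ * w.out) := by
    simpa [image_insert] using mem_oppPairs_mul_left (σ := m⁻¹) hw
  obtain ⟨g, hg, h0, h3⟩ := exists_mul_apply_zero_apply_three h03
  obtain ⟨g', hg', hpin⟩ := exists_mul_mem_pinnedCubes h0 h3
  refine ⟨_, hpin, (Quotient.out_eq w).symm.trans (Quotient.sound ⟨g * g', mul_mem hg hg', ?_⟩)⟩
  group

theorem opp_pair_corner_sharing_general (a b : Fin 6) (v : Variety)
    (hv : ({a, b} : Finset (Fin 6)) ∈ vOpp v) :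
    ({a, b} : Finset (Fin 6)) ∈ vOpp (vMirror v) ∧
    vCorners v ∩ vCorners (vMirror v) = ∅ ∧
    (∀ w : Variety, ({a, b} : Finset (Fin 6)) ∈ vOpp w → w ≠ v → w ≠ vMirror v →
      (vCorners v ∩ vCorners w).card = 2) ∧
    ∀ w w' : Variety, w ≠ w' →
      ({a, b} : Finset (Fin 6)) ∈ vOpp w → w ≠ v → w ≠ vMirror v →
      ({a, b} : Finset (Fin 6)) ∈ vOpp w' → w' ≠ v → w' ≠ vMirror v →
      (vCorners v ∩ vCorners w) ∩ (vCorners v ∩ vCorners w') = ∅ := by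
  obtain ⟨m, rfl, rfl, rfl⟩ := exists_eq_varietyOf_of_mem_vOpp hv
  rw [vMirror_varietyOf, vCorners_varietyOf, vCorners_varietyOf]
  refine ⟨by rwa [vOpp_varietyOf, oppPairs_mirror, ← vOpp_varietyOf],
    cornerTriples_inter_mirror m, ?_, ?_⟩
  · intro w hw hwv hwm
    obtain ⟨d, hd, rfl⟩ := exists_mem_pinnedCubes_of_mem_vOpp hw
    rw [vCorners_varietyOf]
    exact card_cornerTriples_inter hd (mt varietyOf_eq_varietyOf.2 hwv)
      (mt varietyOf_eq_varietyOf.2 hwm)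
  · intro w w' hww' hw hwv hwm hw' hw'v hw'm
    obtain ⟨d, hd, rfl⟩ := exists_mem_pinnedCubes_of_mem_vOpp hw
    obtain ⟨d', hd', rfl⟩ := exists_mem_pinnedCubes_of_mem_vOpp hw'
    rw [vCorners_varietyOf, vCorners_varietyOf]
    exact cornerTriples_inter_inter hd hd' (mt varietyOf_eq_varietyOf.2 hwv)
      (mt varietyOf_eq_varietyOf.2 hwm) (mt varietyOf_eq_varietyOf.2 hw'v)
      (mt varietyOf_eq_varietyOf.2 hw'm) (mt varietyOf_eq_varietyOf.2 hww')

/-- If `v` has `{a, b}` as an opposite pair, then so does its mirror variety; `v` shares no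
corner triples with its mirror variety; `v` shares exactly two corner triples with each of
the other four varieties having `{a, b}` as an opposite pair; and the four shared two-element
sets of corner triples are pairwise disjoint. -/
theorem opp_pair_corner_sharing (a b : Fin 6) (hab : a ≠ b) (v : Variety)
    (hv : ({a, b} : Finset (Fin 6)) ∈ vOpp v) :
    ({a, b} : Finset (Fin 6)) ∈ vOpp (vMirror v) ∧
    vCorners v ∩ vCorners (vMirror v) = ∅ ∧
    (∀ w : Variety, ({a, b} : Finset (Fin 6)) ∈ vOpp w → w ≠ v → w ≠ vMirror v →
      (vCorners v ∩ vCorners w).card = 2) ∧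
    ∀ w w' : Variety, w ≠ w' →
      ({a, b} : Finset (Fin 6)) ∈ vOpp w → w ≠ v → w ≠ vMirror v →
      ({a, b} : Finset (Fin 6)) ∈ vOpp w' → w' ≠ v → w' ≠ vMirror v →
      (vCorners v ∩ vCorners w) ∩ (vCorners v ∩ vCorners w') = ∅ :=
  opp_pair_corner_sharing_general a b v hv
end

section
/- Let v be a variety, v* its mirror variety, and w any variety with w ≠ v and w ≠ v*. Then the multiset consisting of seven cubes of variety v, seven cubes of variety v*, and one cube of variety w contains eight cubes forming a corner solution modeled on v or modeled on v*. -/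
open scoped Classical

/-!
Write `d = c * e`. An opposite pair of colors of `c` is carried by at most two corners of `d`
(none if the two colors are opposite on `d`), so at most six of the eight corners of `d` carry an
opposite pair of `c`. The colors at any other corner of `d` are pairwise adjacent on `c`, hence meet
at a corner of `c`, read either clockwise or counterclockwise: the corner triple is one of `c` or of
its mirror `c * swap 0 3`. That cube `d`, together with seven copies of `c` (resp. of the mirror)
for the remaining corner triples, is a corner solution.
-/

namespace ColoredCube

open Equiv

abbrev Triple := Fin 6 × Fin 6 × Fin 6

def mapTriple (f : Fin 6 → Fin 6) (t : Triple) : Triple := (f t.1, f t.2.1, f t.2.2)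

def faces (t : Triple) : Finset (Fin 6) := {t.1, t.2.1, t.2.2}

def rotationCorner (g : Perm (Fin 6)) : Triple := mapTriple g (0, 1, 2)

/-- One representative for each corner: the four corners around face `2`, reached by the powers
of `r1`, and the four around face `5`, reached after the half turn `r2 ^ 2`. -/
def cornerReps : Finset Triple :=
  Finset.univ.image fun p : Fin 4 × Fin 2 =>
    rotationCorner (r1 ^ (p.1 : ℕ) * r2 ^ (2 * (p.2 : ℕ)))

def clockwiseCorners : Finset Triple := cornerReps.biUnion cycClass

lemma mapTriple_mul (g h : Perm (Fin 6)) (t : Triple) :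
    mapTriple ⇑(g * h) t = mapTriple g (mapTriple h t) := rfl

lemma mapTriple_cyc (f : Fin 6 → Fin 6) (t : Triple) :
    mapTriple f (cyc t) = cyc (mapTriple f t) := rfl

lemma cycClass_cyc (t : Triple) : cycClass (cyc t) = cycClass t := by
  ext u
  simp only [cycClass, Finset.mem_insert, Finset.mem_singleton]
  have : cyc (cyc (cyc t)) = t := rfl
  rw [this]
  tauto

lemma mem_cycClass_self (t : Triple) : t ∈ cycClass t := by
  simp [cycClass]

lemma cycClass_mapTriple_of_mem {s t : Triple} (f : Fin 6 → Fin 6) (h : t ∈ cycClass s) :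
    cycClass (mapTriple f t) = cycClass (mapTriple f s) := by
  simp only [cycClass, Finset.mem_insert, Finset.mem_singleton] at h
  rcases h with rfl | rfl | rfl
  · rfl
  · rw [mapTriple_cyc, cycClass_cyc]
  · rw [mapTriple_cyc, mapTriple_cyc, cycClass_cyc, cycClass_cyc]

lemma r1_mem_G : r1 ∈ G := Subgroup.subset_closure (by simp)

lemma r2_mem_G : r2 ∈ G := Subgroup.subset_closure (by simp)

lemma cornerReps_subset_clockwiseCorners : cornerReps ⊆ clockwiseCorners :=
  fun s hs => Finset.mem_biUnion.mpr ⟨s, hs, mem_cycClass_self s⟩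

set_option maxRecDepth 10000 in
lemma mapTriple_mem_clockwiseCorners {r : Perm (Fin 6)} (hr : r ∈ ({r1, r2} : Set (Perm (Fin 6))))
    {t : Triple} (ht : t ∈ clockwiseCorners) :
    mapTriple r t ∈ clockwiseCorners ∧ mapTriple (⇑r⁻¹) t ∈ clockwiseCorners := by
  revert t
  rcases hr with rfl | rfl <;> decide

lemma rotationCorner_mem_clockwiseCorners {g : Perm (Fin 6)} (hg : g ∈ G) :
    rotationCorner g ∈ clockwiseCorners := by
  induction hg using Subgroup.closure_induction_left with
  | one => exact cornerReps_subset_clockwiseCorners (by decide)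
  | mul_left r hr g _ ih => exact (mapTriple_mem_clockwiseCorners hr ih).1
  | inv_mul_cancel r hr g _ ih => exact (mapTriple_mem_clockwiseCorners hr ih).2

/-- `r1 * r2 = (0 1 2)(3 4 5)` turns the cube about the corner of faces `0, 1, 2`. -/
lemma rotationCorner_mul_r1_mul_r2 (g : Perm (Fin 6)) :
    rotationCorner (g * (r1 * r2)) = cyc (rotationCorner g) := by
  have h : r1 (r2 0) = 1 ∧ r1 (r2 1) = 2 ∧ r1 (r2 2) = 0 := by decide
  simp only [rotationCorner, mapTriple, cyc, Perm.mul_apply, h.1, h.2.1, h.2.2]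

lemma exists_mem_G_rotationCorner_eq {t : Triple} (ht : t ∈ clockwiseCorners) :
    ∃ g ∈ G, rotationCorner g = t := by
  obtain ⟨s, hs, hts⟩ := Finset.mem_biUnion.mp ht
  obtain ⟨⟨k, j⟩, -, rfl⟩ := Finset.mem_image.mp hs
  set g := r1 ^ (k : ℕ) * r2 ^ (2 * (j : ℕ))
  have hg : g ∈ G := G.mul_mem (G.pow_mem r1_mem_G _) (G.pow_mem r2_mem_G _)
  have hρ : r1 * r2 ∈ G := G.mul_mem r1_mem_G r2_mem_G
  simp only [cycClass, Finset.mem_insert, Finset.mem_singleton] at hts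
  rcases hts with rfl | rfl | rfl
  · exact ⟨g, hg, rfl⟩
  · exact ⟨g * (r1 * r2), G.mul_mem hg hρ, rotationCorner_mul_r1_mul_r2 g⟩
  · refine ⟨g * (r1 * r2) * (r1 * r2), G.mul_mem (G.mul_mem hg hρ) hρ, ?_⟩
    rw [rotationCorner_mul_r1_mul_r2, rotationCorner_mul_r1_mul_r2]

lemma mem_cornerTriples_iff (x : CCube) (u : Finset Triple) :
    u ∈ cornerTriples x ↔ ∃ g ∈ G, u = cycClass (mapTriple x (rotationCorner g)) := by
  simp only [cornerTriples, Finset.mem_filter, Finset.mem_univ, true_and]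
  rfl

lemma cycClass_mem_cornerTriples (x : CCube) {t : Triple} (ht : t ∈ clockwiseCorners) :
    cycClass (mapTriple x t) ∈ cornerTriples x := by
  obtain ⟨g, hg, rfl⟩ := exists_mem_G_rotationCorner_eq ht
  exact (mem_cornerTriples_iff x _).mpr ⟨g, hg, rfl⟩

lemma card_cornerReps : cornerReps.card = 8 := by decide

lemma card_cornerTriples_le (x : CCube) : (cornerTriples x).card ≤ 8 := by
  have hsub : cornerTriples x ⊆ cornerReps.image (fun s => cycClass (mapTriple x s)) := by
    intro u hu
    obtain ⟨g, hg, rfl⟩ := (mem_cornerTriples_iff x u).mp hu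
    obtain ⟨s, hs, hgs⟩ := Finset.mem_biUnion.mp (rotationCorner_mem_clockwiseCorners hg)
    exact Finset.mem_image.mpr ⟨s, hs, (cycClass_mapTriple_of_mem x hgs).symm⟩
  calc (cornerTriples x).card ≤ (cornerReps.image (fun s => cycClass (mapTriple x s))).card :=
        Finset.card_le_card hsub
    _ ≤ cornerReps.card := Finset.card_image_le
    _ = 8 := card_cornerReps

set_option maxRecDepth 10000 in
lemma card_faces_of_mem_cornerReps : ∀ s ∈ cornerReps, (faces s).card = 3 := by decide

lemma faces_mapTriple (e : Perm (Fin 6)) (t : Triple) :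
    faces (mapTriple e t) = (faces t).map e.toEmbedding := by
  simp [faces, mapTriple, Finset.map_insert]

set_option maxRecDepth 10000 in
lemma card_filter_cornerReps_le_two :
    ∀ a b : Fin 6, a ≠ b →
      (cornerReps.filter fun s => a ∈ faces s ∧ b ∈ faces s).card ≤ 2 := by
  decide

set_option maxRecDepth 100000 in
lemma mem_clockwiseCorners_or_of_forall_not_opposite {t : Triple} (ht : (faces t).card = 3)
    (hopp : ∀ i ∈ ({0, 1, 2} : Finset (Fin 6)), ¬ (i ∈ faces t ∧ tau i ∈ faces t)) :
    t ∈ clockwiseCorners ∨ mapTriple (swap 0 3) t ∈ clockwiseCorners := by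
  revert t
  decide

/-- Each of the three opposite pairs `{e⁻¹ i, e⁻¹ (tau i)}` lies on at most two of the eight
corners, and `3 * 2 < 8`. -/
lemma exists_cornerRep_forall_not_opposite (e : Perm (Fin 6)) :
    ∃ s ∈ cornerReps, ∀ i ∈ ({0, 1, 2} : Finset (Fin 6)),
      ¬ (i ∈ faces (mapTriple e s) ∧ tau i ∈ faces (mapTriple e s)) := by
  by_contra! h
  set bad := fun i : Fin 6 =>
    cornerReps.filter (fun s => e.symm i ∈ faces s ∧ e.symm (tau i) ∈ faces s)
  have hsub : cornerReps ⊆ ({0, 1, 2} : Finset (Fin 6)).biUnion bad := by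
    intro s hs
    obtain ⟨i, hi, hmem⟩ := h s hs
    simp only [faces_mapTriple, Finset.mem_map_equiv] at hmem
    exact Finset.mem_biUnion.mpr ⟨i, hi, Finset.mem_filter.mpr ⟨hs, hmem⟩⟩
  have hbad : ∀ i, (bad i).card ≤ 2 := fun i =>
    card_filter_cornerReps_le_two _ _ (e.symm.injective.ne (by simp [tau]))
  have : 8 ≤ 6 :=
    calc 8 = cornerReps.card := card_cornerReps.symm
      _ ≤ ∑ i ∈ ({0, 1, 2} : Finset (Fin 6)), (bad i).card :=
        (Finset.card_le_card hsub).trans Finset.card_biUnion_le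
      _ ≤ ∑ _i ∈ ({0, 1, 2} : Finset (Fin 6)), 2 := Finset.sum_le_sum fun i _ => hbad i
      _ = 6 := rfl
  omega

lemma mapTriple_mirror_swap (c : CCube) (t : Triple) :
    mapTriple (mirror c) (mapTriple (swap 0 3) t) = mapTriple c t := by
  rw [← mapTriple_mul, mirror, mul_swap_mul_self]

lemma exists_common_cornerTriple (c d : CCube) :
    ∃ u ∈ cornerTriples d, u ∈ cornerTriples c ∨ u ∈ cornerTriples (mirror c) := by
  obtain ⟨s, hs, hopp⟩ := exists_cornerRep_forall_not_opposite (c⁻¹ * d)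
  have hcard : (faces (mapTriple ⇑(c⁻¹ * d) s)).card = 3 := by
    rw [faces_mapTriple, Finset.card_map]
    exact card_faces_of_mem_cornerReps s hs
  have hd : mapTriple d s = mapTriple c (mapTriple ⇑(c⁻¹ * d) s) := by
    rw [← mapTriple_mul, mul_inv_cancel_left]
  refine ⟨cycClass (mapTriple d s),
    cycClass_mem_cornerTriples d (cornerReps_subset_clockwiseCorners hs), ?_⟩
  rcases mem_clockwiseCorners_or_of_forall_not_opposite hcard hopp with h | h
  · left
    rw [hd]
    exact cycClass_mem_cornerTriples c h
  · right
    rw [hd, ← mapTriple_mirror_swap]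
    exact cycClass_mem_cornerTriples (mirror c) h

lemma cornerSolutionOn_add_singleton {T : Multiset CCube} {m d : CCube}
    {u : Finset Triple} (hm : u ∈ cornerTriples m) (hd : u ∈ cornerTriples d)
    (hT : Multiset.replicate 7 m ≤ T) : CornerSolutionOn (T + {d}) m := by
  have hS : d ::ₘ Multiset.replicate 7 m ≤ T + {d} := by
    rw [add_comm, Multiset.singleton_add]
    exact Multiset.cons_le_cons d hT
  refine ⟨fun t => if t = u then d else m, le_trans ?_ hS, fun t ht => ?_⟩
  · rw [← Multiset.cons_erase (Finset.mem_val.mpr hm), Multiset.map_cons, if_pos rfl]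
    refine Multiset.cons_le_cons d ?_
    have hrest : ∀ t ∈ (cornerTriples m).val.erase u, (if t = u then d else m) = m :=
      fun t ht => if_neg ((Multiset.Nodup.mem_erase_iff (cornerTriples m).nodup).mp ht).1
    rw [Multiset.map_congr rfl hrest, Multiset.map_const', Multiset.replicate_le_replicate,
      Multiset.card_erase_of_mem (Finset.mem_val.mpr hm), Nat.pred_eq_sub_one]
    have := card_cornerTriples_le m
    simp only [Finset.card_val] at *
    omega
  · dsimp only
    split_ifs with h
    · exact h ▸ hd
    · exact ht

end ColoredCube

theorem two_sevens_general (c d : CCube) :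
    CornerSolutionOn (Multiset.replicate 7 c + Multiset.replicate 7 (mirror c) + {d}) c ∨
    CornerSolutionOn (Multiset.replicate 7 c + Multiset.replicate 7 (mirror c) + {d})
      (mirror c) := by
  obtain ⟨u, hd, hc | hc⟩ := ColoredCube.exists_common_cornerTriple c d
  · exact Or.inl (ColoredCube.cornerSolutionOn_add_singleton hc hd (Multiset.le_add_right _ _))
  · exact Or.inr (ColoredCube.cornerSolutionOn_add_singleton hc hd (Multiset.le_add_left _ _))

/-- Seven cubes of a variety, seven of its mirror variety, and one cube of any other variety
contain eight cubes forming a corner solution modeled on the variety or on its mirror. -/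
theorem two_sevens (c d : CCube) (h1 : ¬ sameVariety d c) (h2 : ¬ sameVariety d (mirror c)) :
    CornerSolutionOn (Multiset.replicate 7 c + Multiset.replicate 7 (mirror c) + {d}) c ∨
    CornerSolutionOn (Multiset.replicate 7 c + Multiset.replicate 7 (mirror c) + {d})
      (mirror c) :=
  two_sevens_general c d
end
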